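/- Let e be an idempotent of kN such that the left module kN·e, together with the map induced by the augmentation, is a projective cover of the trivial kN-module k. Then for every natural number n there are isomorphisms of left kN-modules Jⁿ/(Jⁿ·A) ≅ (Jⁿ·e)/(Jⁿ⁺¹·e), where Jⁿ·A denotes the k-span of products x·a with x ∈ Jⁿ and a ∈ A. -/

import Mathlib

/-!
Right multiplication by `e` maps `Jⁿ` onto `Jⁿe`, and the point is that the preimage of `Jⁿ⁺¹e`
is exactly `JⁿA`. Since `aug e = 1`, each `x ∈ Jⁿ` is `xe + x(1 - e)` with `x(1 - e) ∈ JⁿA`, and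
`Jⁿ⁺¹e ⊆ JⁿA` because `J ⊆ A`. Conversely `Ae ⊆ kNe ∩ A = ker π`, which is superfluous and hence
lies in the radical of `kNe`, so inside `J`; thus `xae = x(ae)e ∈ Jⁿ⁺¹e` for `a ∈ A`.
-/

noncomputable section

variable (k : Type) [Field k] (N : Type) [Group N] [Fintype N]

/-- The Jacobson radical `J` of `kN`, as a `k`-submodule of `kN`. -/
def Jrad : Submodule k (MonoidAlgebra k N) :=
  ((⊥ : Ideal (MonoidAlgebra k N)).jacobson).restrictScalars k

/-- The augmentation map `kN →ₐ[k] k`, sending each group element to `1`. -/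
def aug : MonoidAlgebra k N →ₐ[k] k :=
  MonoidAlgebra.lift k k N 1

/-- The augmentation ideal `A` of `kN`. -/
def augIdeal : Ideal (MonoidAlgebra k N) :=
  RingHom.ker (aug k N).toRingHom

/-- The trivial `kN`-module `k`. -/
def Triv : Type := k

instance : AddCommGroup (Triv k) := inferInstanceAs (AddCommGroup k)

instance : Module (MonoidAlgebra k N) (Triv k) :=
  Module.compHom k (aug k N).toRingHom

/-- `Jⁿ`, as a left ideal of `kN` (as a set it is the `n`-th power of `J`). -/
def Jpow (n : ℕ) : Ideal (MonoidAlgebra k N) :=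
  Submodule.span (MonoidAlgebra k N) ((Jrad k N ^ n : Submodule k (MonoidAlgebra k N)) :
    Set (MonoidAlgebra k N))

/-- `Jⁿ·A`, the span of the products `x * a`, `x ∈ Jⁿ`, `a ∈ A`. -/
def JpowA (n : ℕ) : Ideal (MonoidAlgebra k N) :=
  Submodule.span (MonoidAlgebra k N)
    {y | ∃ x ∈ (Jrad k N ^ n : Submodule k (MonoidAlgebra k N)),
      ∃ a ∈ augIdeal k N, y = x * a}

/-- `Jⁿ·e`, the span of the products `x * e`, `x ∈ Jⁿ`. -/
def JpowE (e : MonoidAlgebra k N) (n : ℕ) : Ideal (MonoidAlgebra k N) :=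
  Submodule.span (MonoidAlgebra k N)
    {y | ∃ x ∈ (Jrad k N ^ n : Submodule k (MonoidAlgebra k N)), y = x * e}

open Submodule

theorem Submodule.nonempty_quotEquiv_of_surjective {R M P : Type*} [Ring R]
    [AddCommGroup M] [Module R M] [AddCommGroup P] [Module R P]
    (f : M →ₗ[R] P) (hf : Function.Surjective f) {p : Submodule R M} {q : Submodule R P}
    (h : q.comap f = p) : Nonempty ((M ⧸ p) ≃ₗ[R] P ⧸ q) := by
  have hker : LinearMap.ker (q.mkQ ∘ₗ f) = p := by
    rw [LinearMap.ker_comp, ker_mkQ, h]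
  exact ⟨(quotEquivOfEq _ _ hker.symm).trans
    ((q.mkQ ∘ₗ f).quotKerEquivOfSurjective (q.mkQ_surjective.comp hf))⟩

theorem Submodule.le_jacobson_of_forall_sup_eq_top {R M : Type*} [Ring R]
    [AddCommGroup M] [Module R M] {K : Submodule R M}
    (hK : ∀ p : Submodule R M, p ⊔ K = ⊤ → p = ⊤) : K ≤ Module.jacobson R M :=
  le_sInf fun C hC => by
    by_contra hKC
    exact hC.1 (hK C (hC.2 _ (left_lt_sup.2 hKC)))

section RightMulIdempotent

variable {F R : Type*} [CommRing F] [Ring R] [Algebra F R]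
  {S T : Submodule F R} {A : Ideal R} {e : R}

theorem span_le_comap_mul_right_span {s t : Set R} (hst : ∀ x ∈ s, x * e ∈ t) :
    span R s ≤ (span R t).comap (LinearMap.toSpanSingleton R R e) :=
  span_le.2 fun x hx => subset_span (hst x hx)

theorem span_mul_right_eq_map :
    span R {y | ∃ x ∈ S, y = x * e} =
      (span R (S : Set R)).map (LinearMap.toSpanSingleton R R e) := by
  rw [map_span]
  congr 1
  ext y
  simp [eq_comm]

theorem span_mul_mul_right_le_span_mul (hT : ∀ t ∈ T, t * e ∈ A) :
    span R {y | ∃ x ∈ S * T, y = x * e} ≤ span R {y | ∃ x ∈ S, ∃ a ∈ A, y = x * a} := by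
  refine span_le.2 ?_
  rintro _ ⟨z, hz, rfl⟩
  refine Submodule.mul_induction_on
    (C := fun z => z * e ∈ span R {y | ∃ x ∈ S, ∃ a ∈ A, y = x * a}) hz (fun s hs t ht => subset_span ⟨s, hs, t * e, hT t ht, mul_assoc s t e⟩) ?_
  intro _ _ hx hy
  rw [add_mul]
  exact add_mem hx hy

theorem mul_right_mem_span_mul_mul_right_iff (he : IsIdempotentElem e) (hT : ∀ t ∈ T, t * e ∈ A)
    (hA : ∀ a ∈ A, a * e ∈ T) (he1 : 1 - e ∈ A) {x : R} (hx : x ∈ span R (S : Set R)) :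
    x * e ∈ span R {y | ∃ x ∈ S * T, y = x * e} ↔
      x ∈ span R {y | ∃ x ∈ S, ∃ a ∈ A, y = x * a} := by
  constructor
  · intro hxe
    have hx1e : x * (1 - e) ∈ span R {y | ∃ x ∈ S, ∃ a ∈ A, y = x * a} :=
      span_le_comap_mul_right_span (t := {y | ∃ x ∈ S, ∃ a ∈ A, y = x * a})
        (fun s hs => ⟨s, hs, 1 - e, he1, rfl⟩) hx
    rw [show x = x * e + x * (1 - e) by noncomm_ring]
    exact add_mem (span_mul_mul_right_le_span_mul hT hxe) hx1e
  · refine fun h => span_le_comap_mul_right_span ?_ h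
    rintro _ ⟨s, hs, a, ha, rfl⟩
    refine ⟨s * (a * e), mul_mem_mul hs (hA a ha), ?_⟩
    simp only [mul_assoc, he.eq]

/-- Right multiplication by `e` identifies `R·S / R·SA` with `R·Se / R·(ST)e`. -/
theorem nonempty_quotEquiv_span_mul_right (he : IsIdempotentElem e)
    (hT : ∀ t ∈ T, t * e ∈ A) (hA : ∀ a ∈ A, a * e ∈ T) (he1 : 1 - e ∈ A) :
    Nonempty ((span R (S : Set R) ⧸
        (span R {y | ∃ x ∈ S, ∃ a ∈ A, y = x * a}).comap (span R (S : Set R)).subtype) ≃ₗ[R]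
      (span R {y | ∃ x ∈ S, y = x * e} ⧸
        (span R {y | ∃ x ∈ S * T, y = x * e}).comap
          (span R {y | ∃ x ∈ S, y = x * e}).subtype)) := by
  have hmaps : ∀ x ∈ span R (S : Set R),
      LinearMap.toSpanSingleton R R e x ∈ span R {y | ∃ x ∈ S, y = x * e} := by
    rw [span_mul_right_eq_map]
    exact fun x hx => mem_map_of_mem hx
  refine nonempty_quotEquiv_of_surjective ((LinearMap.toSpanSingleton R R e).restrict hmaps)
    ?_ ?_
  · rintro ⟨y, hy⟩
    rw [span_mul_right_eq_map] at hy
    obtain ⟨x, hx, rfl⟩ := hy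
    exact ⟨⟨x, hx⟩, rfl⟩
  · ext ⟨x, hx⟩
    exact mul_right_mem_span_mul_mul_right_iff he hT hA he1 hx

end RightMulIdempotent

theorem Ring.jacobson_le_ker_algHom {F R : Type*} [Field F] [Ring R] [Algebra F R]
    (f : R →ₐ[F] F) : Ring.jacobson R ≤ RingHom.ker f :=
  have := RingHom.ker_isMaximal_of_surjective f fun c => ⟨algebraMap F R c, f.commutes c⟩
  Ring.jacobson_le_of_isMaximal _

theorem Ideal.coe_mem_jacobson_of_forall_sup_eq_top {R : Type*} [Ring R] {I : Ideal R}
    {K : Submodule R I} (hK : ∀ p : Submodule R I, p ⊔ K = ⊤ → p = ⊤) {x : I} (hx : x ∈ K) :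
    (x : R) ∈ Ring.jacobson R :=
  Module.map_jacobson_le I.subtype (Submodule.mem_map_of_mem (le_jacobson_of_forall_sup_eq_top hK hx))

theorem stmt10 (e : MonoidAlgebra k N) (he : IsIdempotentElem e)
    (π : ↥(Ideal.span {e}) →ₗ[MonoidAlgebra k N] Triv k)
    (hπ : ∀ x : ↥(Ideal.span {e}), π x = aug k N (x : MonoidAlgebra k N))
    (hsurj : Function.Surjective π)
    (hsup : ∀ p : Submodule (MonoidAlgebra k N) ↥(Ideal.span {e}),
      p ⊔ LinearMap.ker π = ⊤ → p = ⊤) :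
    ∀ n : ℕ,
      Nonempty
        ((↥(Jpow k N n) ⧸
            Submodule.comap (Jpow k N n).subtype (JpowA k N n)) ≃ₗ[MonoidAlgebra k N]
          (↥(JpowE k N e n) ⧸
            Submodule.comap (JpowE k N e n).subtype (JpowE k N e (n + 1)))) := by
  intro n
  have hJrad : ∀ x, x ∈ Jrad k N ↔ x ∈ Ring.jacobson (MonoidAlgebra k N) := fun x => by
    rw [Jrad, restrictScalars_mem, Ideal.jacobson_bot]
  have haug_e : aug k N e = 1 := by
    obtain ⟨⟨y, hy⟩, hy1⟩ := hsurj (show Triv k from (1 : k))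
    obtain ⟨c, rfl⟩ := mem_span_singleton.1 hy
    have h1 : aug k N (c • e) = 1 := (hπ _).symm.trans hy1
    have hne : aug k N e ≠ 0 := fun h0 => by
      simp [h0] at h1
    exact (IsIdempotentElem.iff_eq_zero_or_one.1 (he.map (aug k N))).resolve_left hne
  have hJ : ∀ j ∈ Jrad k N, j * e ∈ augIdeal k N := fun j hj => by
    have hj0 : aug k N j = 0 := Ring.jacobson_le_ker_algHom (aug k N) ((hJrad j).1 hj)
    show aug k N (j * e) = 0
    rw [map_mul, hj0, zero_mul]
  have hA : ∀ a ∈ augIdeal k N, a * e ∈ Jrad k N := by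
    intro a ha
    have hae : a * e ∈ Ideal.span {e} := Ideal.mul_mem_left _ a (Ideal.mem_span_singleton_self e)
    have hker : (⟨a * e, hae⟩ : Ideal.span {e}) ∈ LinearMap.ker π := by
      have ha0 : aug k N a = 0 := RingHom.mem_ker.1 ha
      rw [LinearMap.mem_ker, hπ, map_mul, ha0, zero_mul]
      rfl
    exact (hJrad _).2 (Ideal.coe_mem_jacobson_of_forall_sup_eq_top hsup hker)
  have he1 : 1 - e ∈ augIdeal k N := by
    show aug k N (1 - e) = 0
    rw [map_sub, map_one, haug_e, sub_self]
  exact nonempty_quotEquiv_span_mul_right (S := Jrad k N ^ n) he hJ hA he1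

end
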